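/- Let q : (G,𝒫) → (H,𝒬) be an (L,C,M)-quasi-isometry of group pairs. If (H,𝒬) is reducible (every Q ∈ 𝒬 has finite index in comm_H(Q)), then (G,𝒫) is reducible (every P ∈ 𝒫 has finite index in comm_G(P)). -/

import Mathlib

/-!
A coset `gP` is at finite Hausdorff distance from `P` exactly when `g` commensurates `P`, so `P`
has finite index in its commensurator iff only finitely many cosets of `P` are at finite distance
from `P`. The quasi-isometry matches each of these with a coset of `𝒬` at finite distance from the
coset matched with `P`, and reducibility of `(H, 𝒬)` leaves only finitely many candidates. Cosets
of `P` matched with the same coset of `𝒬` are within the uniform distance `L (2M + C)` of each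
other, and only finitely many cosets of `P` lie within a given distance of a given one.
-/

open scoped Pointwise ENNReal NNReal

namespace CIC

variable {G : Type*} [Group G] {H : Type*} [Group H]

/-- Word length of `g` with respect to the generating set `S`: the least `n` such that `g`
is a product of `n` elements of `S ∪ S⁻¹`. -/
noncomputable def wordLength (S : Set G) (g : G) : ℕ :=
  sInf {n | ∃ l : List G, (∀ x ∈ l, x ∈ S ∨ x⁻¹ ∈ S) ∧ l.length = n ∧ l.prod = g}

/-- The word metric on `G` associated to the generating set `S`. -/
noncomputable def wdist (S : Set G) (g h : G) : ℕ := wordLength S (g⁻¹ * h)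

/-- Closed `r`-neighborhood of `A` with respect to the word metric of `S`. -/
def nbhd (S : Set G) (r : ℝ) (A : Set G) : Set G :=
  {x | ∃ a ∈ A, (wdist S a x : ℝ) ≤ r}

/-- Hausdorff distance between subsets of `G`, valued in `[0,∞]`: the infimum of those
`r ≥ 0` such that each set is contained in the closed `r`-neighborhood of the other,
the infimum of the empty set being `∞`. -/
noncomputable def hdist (S : Set G) (A B : Set G) : ℝ≥0∞ :=
  ⨅ (r : ℝ≥0) (_ : A ⊆ nbhd S (r : ℝ) B ∧ B ⊆ nbhd S (r : ℝ) A), (r : ℝ≥0∞)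

/-- The conjugate subgroup `g P g⁻¹`. -/
def conj (g : G) (P : Subgroup G) : Subgroup G := P.map (MulAut.conj g).toMonoidHom

/-- The set `G/𝒫` of all left cosets `gP` with `g ∈ G` and `P ∈ 𝒫`. -/
def cosets (Ps : Finset (Subgroup G)) : Set (Set G) :=
  {A | ∃ (g : G) (P : Subgroup G), P ∈ Ps ∧ A = g • (P : Set G)}

/-- A group pair `(G, 𝒫)`: `S` is a finite generating set of `G` and `𝒫` is a finite
collection of infinite subgroups of `G`. -/
structure IsGroupPair (S : Finset G) (Ps : Finset (Subgroup G)) : Prop where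
  generates : Subgroup.closure (S : Set G) = ⊤
  infinite : ∀ P ∈ Ps, (P : Set G).Infinite

/-- An `(L,C,M)`-quasi-isometry of group pairs `q : (G,𝒫) → (H,𝒬)`. -/
structure IsPairQI (S : Finset G) (T : Finset H)
    (Ps : Finset (Subgroup G)) (Qs : Finset (Subgroup H))
    (L C M : ℝ≥0) (q : G → H) : Prop where
  one_le : 1 ≤ L
  lower : ∀ a b : G, (wdist (S : Set G) a b : ℝ) / L - C ≤ (wdist (T : Set H) (q a) (q b) : ℝ)
  upper : ∀ a b : G, (wdist (T : Set H) (q a) (q b) : ℝ) ≤ L * (wdist (S : Set G) a b : ℝ) + C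
  dense : ∀ y : H, ∃ x : G, (wdist (T : Set H) (q x) y : ℝ) ≤ C
  coset_fwd : ∀ A ∈ cosets Ps, ∃ B ∈ cosets Qs, hdist (T : Set H) (q '' A) B < (M : ℝ≥0∞)
  coset_bwd : ∀ B ∈ cosets Qs, ∃ A ∈ cosets Ps, hdist (T : Set H) (q '' A) B < (M : ℝ≥0∞)


section WordMetric

variable {S : Set G}

lemma wordLength_prod_le_length {l : List G} (hl : ∀ x ∈ l, x ∈ S ∨ x⁻¹ ∈ S) :
    wordLength S l.prod ≤ l.length :=
  Nat.sInf_le ⟨l, hl, rfl, rfl⟩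

lemma exists_list_prod_eq (hgen : Subgroup.closure S = ⊤) (g : G) :
    ∃ l : List G, (∀ x ∈ l, x ∈ S ∨ x⁻¹ ∈ S) ∧ l.prod = g := by
  have hg : g ∈ (Subgroup.closure S).toSubmonoid := by simp [hgen]
  rw [Subgroup.closure_toSubmonoid] at hg
  simpa [Set.mem_inv] using Submonoid.exists_list_of_mem_closure hg

lemma exists_list_length_eq_wordLength (hgen : Subgroup.closure S = ⊤) (g : G) :
    ∃ l : List G, (∀ x ∈ l, x ∈ S ∨ x⁻¹ ∈ S) ∧ l.length = wordLength S g ∧ l.prod = g := by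
  obtain ⟨l, hl, hprod⟩ := exists_list_prod_eq hgen g
  exact Nat.sInf_mem
    (s := {n | ∃ l : List G, (∀ x ∈ l, x ∈ S ∨ x⁻¹ ∈ S) ∧ l.length = n ∧ l.prod = g})
    ⟨l.length, l, hl, rfl, hprod⟩

lemma wordLength_mul_le (hgen : Subgroup.closure S = ⊤) (g h : G) :
    wordLength S (g * h) ≤ wordLength S g + wordLength S h := by
  obtain ⟨l, hl, hlen, rfl⟩ := exists_list_length_eq_wordLength hgen g
  obtain ⟨m, hm, hmlen, rfl⟩ := exists_list_length_eq_wordLength hgen h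
  rw [← hlen, ← hmlen, ← List.length_append, ← List.prod_append]
  exact wordLength_prod_le_length fun x hx => (List.mem_append.1 hx).elim (hl x) (hm x)

lemma wdist_triangle (hgen : Subgroup.closure S = ⊤) (a b c : G) :
    wdist S a c ≤ wdist S a b + wdist S b c := by
  simpa [wdist, mul_assoc] using wordLength_mul_le hgen (a⁻¹ * b) (b⁻¹ * c)

lemma wdist_mul_left (g a b : G) : wdist S (g * a) (g * b) = wdist S a b := by
  simp [wdist, mul_assoc]

lemma finite_setOf_wordLength_le (hS : S.Finite) (hgen : Subgroup.closure S = ⊤) (r : ℝ) :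
    {g : G | (wordLength S g : ℝ) ≤ r}.Finite := by
  have : Finite ↥(S ∪ S⁻¹) := (hS.union hS.inv).to_subtype
  refine ((List.finite_length_le ↥(S ∪ S⁻¹) ⌊r⌋₊).image
    fun l => (l.map Subtype.val).prod).subset ?_
  intro g hg
  obtain ⟨l, hl, hlen, rfl⟩ := exists_list_length_eq_wordLength hgen g
  lift l to List ↥(S ∪ S⁻¹) using (by simpa [Set.mem_inv] using hl)
  refine ⟨l, ?_, rfl⟩
  rw [Set.mem_ofPred_eq, ← List.length_map (f := Subtype.val), hlen]
  exact Nat.le_floor hg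

end WordMetric

section Neighbourhoods

variable {S : Set G}

lemma nbhd_mono {r r' : ℝ} {A B : Set G} (hr : r ≤ r') (hAB : A ⊆ B) :
    nbhd S r A ⊆ nbhd S r' B :=
  fun _ ⟨a, ha, hd⟩ => ⟨a, hAB ha, hd.trans hr⟩

lemma nbhd_nbhd_subset (hgen : Subgroup.closure S = ⊤) {r r' : ℝ} {A : Set G} :
    nbhd S r (nbhd S r' A) ⊆ nbhd S (r + r') A := by
  rintro x ⟨a, ⟨y, hy, hya⟩, hax⟩
  refine ⟨y, hy, ?_⟩
  calc (wdist S y x : ℝ) ≤ wdist S y a + wdist S a x := by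
        exact_mod_cast wdist_triangle hgen y a x
    _ ≤ r + r' := by linarith

lemma nbhd_smul (g : G) (r : ℝ) (A : Set G) : nbhd S r (g • A) = g • nbhd S r A := by
  ext x
  rw [Set.mem_smul_set_iff_inv_smul_mem]
  constructor
  · rintro ⟨_, ⟨a, ha, rfl⟩, hd⟩
    exact ⟨a, ha, by rwa [smul_eq_mul, ← wdist_mul_left g, mul_inv_cancel_left]⟩
  · rintro ⟨a, ha, hd⟩
    exact ⟨g • a, Set.smul_mem_smul_set ha,
      by rwa [smul_eq_mul, ← wdist_mul_left g⁻¹, inv_mul_cancel_left]⟩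

end Neighbourhoods

def CloseWithin (S : Set G) (r : ℝ) (A B : Set G) : Prop :=
  A ⊆ nbhd S r B ∧ B ⊆ nbhd S r A

namespace CloseWithin

variable {S : Set G} {r r' : ℝ} {A B D : Set G}

lemma symm (h : CloseWithin S r A B) : CloseWithin S r B A :=
  And.symm h

lemma trans (hgen : Subgroup.closure S = ⊤) (h₁ : CloseWithin S r A B)
    (h₂ : CloseWithin S r' B D) : CloseWithin S (r + r') A D :=
  ⟨h₁.1.trans <| (nbhd_mono le_rfl h₂.1).trans (nbhd_nbhd_subset hgen),
    h₂.2.trans <| (nbhd_mono le_rfl h₁.2).trans <|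
      (nbhd_nbhd_subset hgen).trans (nbhd_mono (add_comm r' r).le subset_rfl)⟩

lemma mono (h : CloseWithin S r A B) (hr : r ≤ r') : CloseWithin S r' A B :=
  ⟨h.1.trans (nbhd_mono hr subset_rfl), h.2.trans (nbhd_mono hr subset_rfl)⟩

lemma smul_iff (g : G) : CloseWithin S r (g • A) (g • B) ↔ CloseWithin S r A B := by
  simp only [CloseWithin, nbhd_smul, Set.smul_set_subset_smul_set_iff]

end CloseWithin

lemma closeWithin_of_hdist_lt {S : Set G} {A B : Set G} {M : ℝ≥0}
    (h : hdist S A B < M) : CloseWithin S M A B := by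
  obtain ⟨r, hAB, hrM⟩ := by simpa only [hdist, iInf_lt_iff] using h
  have hr : (r : ℝ) ≤ M := by exact_mod_cast (ENNReal.coe_lt_coe.1 hrM).le
  exact CloseWithin.mono hAB hr

section CoarseMaps

variable {S : Set G} {T : Set H} {q : G → H} {L C : ℝ≥0} {A B : Set G}

lemma image_subset_nbhd_image
    (hupper : ∀ a b : G, (wdist T (q a) (q b) : ℝ) ≤ L * (wdist S a b : ℝ) + C)
    {r : ℝ} (h : A ⊆ nbhd S r B) : q '' A ⊆ nbhd T (L * r + C) (q '' B) := by
  rintro _ ⟨x, hx, rfl⟩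
  obtain ⟨b, hb, hd⟩ := h hx
  exact ⟨q b, Set.mem_image_of_mem q hb,
    (hupper b x).trans (by gcongr)⟩

lemma subset_nbhd_of_image_subset (hL : 0 < L)
    (hlower : ∀ a b : G, (wdist S a b : ℝ) / L - C ≤ (wdist T (q a) (q b) : ℝ))
    {m : ℝ} (h : q '' A ⊆ nbhd T m (q '' B)) : A ⊆ nbhd S (L * (m + C)) B := by
  intro x hx
  obtain ⟨_, ⟨b, hb, rfl⟩, hd⟩ := h (Set.mem_image_of_mem q hx)
  refine ⟨b, hb, ?_⟩
  have hL' : (0 : ℝ) < L := hL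
  rw [← div_le_iff₀' hL']
  linarith [hlower b x]

lemma CloseWithin.image
    (hupper : ∀ a b : G, (wdist T (q a) (q b) : ℝ) ≤ L * (wdist S a b : ℝ) + C)
    {r : ℝ} (h : CloseWithin S r A B) : CloseWithin T (L * r + C) (q '' A) (q '' B) :=
  ⟨image_subset_nbhd_image hupper h.1, image_subset_nbhd_image hupper h.2⟩

lemma CloseWithin.of_image (hL : 0 < L)
    (hlower : ∀ a b : G, (wdist S a b : ℝ) / L - C ≤ (wdist T (q a) (q b) : ℝ))
    {m : ℝ} (h : CloseWithin T m (q '' A) (q '' B)) : CloseWithin S (L * (m + C)) A B :=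
  ⟨subset_nbhd_of_image_subset hL hlower h.1, subset_nbhd_of_image_subset hL hlower h.2⟩

end CoarseMaps

section Cosets

variable {K A : Subgroup G}

lemma finite_image_smul_coe_iff :
    ((· • (K : Set G)) '' (A : Set G)).Finite ↔ K.relIndex A ≠ 0 := by
  let f : A ⧸ K.subgroupOf A → Set G :=
    Quotient.lift (fun a : A => (a : G) • (K : Set G)) fun a b hab => by
      rw [leftCoset_eq_iff]
      exact Subgroup.mem_subgroupOf.1 (QuotientGroup.leftRel_apply.1 hab)
  have hf : f.Injective := by
    rintro ⟨a⟩ ⟨b⟩ hab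
    exact Quotient.sound (QuotientGroup.leftRel_apply.2
      (Subgroup.mem_subgroupOf.2 ((leftCoset_eq_iff K).1 hab)))
  have hrange : (· • (K : Set G)) '' (A : Set G) = Set.range f := by
    ext X
    simp [f, QuotientGroup.mk_surjective.exists]
  rw [hrange, Set.finite_range_iff hf, Subgroup.relIndex, Subgroup.index_ne_zero_iff_finite]

lemma mem_conjAct_smul_iff {c x : G} : x ∈ ConjAct.toConjAct c • K ↔ c⁻¹ * x * c ∈ K := by
  rw [Subgroup.mem_pointwise_smul_iff_inv_smul_mem, ← map_inv, ConjAct.toConjAct_smul, inv_inv]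

end Cosets

section Commensurability

variable {S : Set G}

lemma exists_subset_nbhd_smul_of_relIndex_ne_zero {A B : Subgroup G} {c : G}
    (h : (ConjAct.toConjAct c • B).relIndex A ≠ 0) :
    ∃ r : ℝ, (A : Set G) ⊆ nbhd S r (c • (B : Set G)) := by
  obtain ⟨F, -, hF, hFimg⟩ := Set.exists_subset_image_finite_and.1
    ⟨_, subset_rfl, finite_image_smul_coe_iff.2 h, rfl⟩
  obtain ⟨r, hr⟩ := (hF.image fun t => (wordLength S (c⁻¹ * t⁻¹) : ℝ)).bddAbove
  refine ⟨r, fun a ha => ?_⟩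
  obtain ⟨t, ht, hta⟩ : a⁻¹ • ((ConjAct.toConjAct c • B : Subgroup G) : Set G) ∈
      (· • ((ConjAct.toConjAct c • B : Subgroup G) : Set G)) '' F :=
    hFimg ▸ ⟨a⁻¹, A.inv_mem ha, rfl⟩
  have hb : c⁻¹ * (t⁻¹ * a⁻¹) * c ∈ B :=
    mem_conjAct_smul_iff.1 ((leftCoset_eq_iff _).1 hta)
  -- `a⁻¹ = t (c b c⁻¹)`, so `a` lies within `|c⁻¹ t⁻¹|` of `c b⁻¹`
  refine ⟨c * (c⁻¹ * (t⁻¹ * a⁻¹) * c)⁻¹, Set.smul_mem_smul_set (B.inv_mem hb), ?_⟩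
  have hd : wdist S (c * (c⁻¹ * (t⁻¹ * a⁻¹) * c)⁻¹) a = wordLength S (c⁻¹ * t⁻¹) := by
    simp only [wdist]; congr 1; group
  exact hd ▸ hr ⟨t, ht, rfl⟩

lemma relIndex_ne_zero_of_subset_nbhd_smul (hS : S.Finite) (hgen : Subgroup.closure S = ⊤)
    {A B : Subgroup G} {c : G} {r : ℝ} (h : (A : Set G) ⊆ nbhd S r (c • (B : Set G))) :
    (ConjAct.toConjAct c • B).relIndex A ≠ 0 := by
  rw [← finite_image_smul_coe_iff]
  refine ((finite_setOf_wordLength_le hS hgen r).image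
    fun s => (c * s)⁻¹ • ((ConjAct.toConjAct c • B : Subgroup G) : Set G)).subset ?_
  rintro _ ⟨a, ha, rfl⟩
  obtain ⟨_, ⟨b, hb, rfl⟩, hd⟩ := h (A.inv_mem ha)
  -- `a⁻¹ = c b s` with `|s| ≤ r`, so `a` lies in the coset `(c s)⁻¹ (c B c⁻¹)`
  refine ⟨(c * b)⁻¹ * a⁻¹, hd, (leftCoset_eq_iff _).2 (mem_conjAct_smul_iff.2 ?_)⟩
  convert B.inv_mem hb using 1
  group

lemma exists_closeWithin_iff_mem_commensurator (hS : S.Finite) (hgen : Subgroup.closure S = ⊤)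
    {P : Subgroup G} {g : G} :
    (∃ r : ℝ, CloseWithin S r (g • (P : Set G)) P) ↔
      g ∈ Subgroup.Commensurable.commensurator P := by
  have hinv :
      P.relIndex (ConjAct.toConjAct g • P) = (ConjAct.toConjAct g⁻¹ • P).relIndex P := by
    rw [← Subgroup.relIndex_pointwise_smul (ConjAct.toConjAct g⁻¹), smul_smul, ← map_mul,
      inv_mul_cancel, map_one, one_smul]
  have htranslate : ∀ r : ℝ, (P : Set G) ⊆ nbhd S r (g⁻¹ • (P : Set G)) ↔
      g • (P : Set G) ⊆ nbhd S r P := fun r => by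
    rw [nbhd_smul, Set.smul_set_subset_iff_subset_inv_smul_set]
  rw [Subgroup.Commensurable.commensurator_mem_iff, Subgroup.Commensurable, hinv]
  constructor
  · rintro ⟨r, hPg, hgP⟩
    exact ⟨relIndex_ne_zero_of_subset_nbhd_smul hS hgen hgP,
      relIndex_ne_zero_of_subset_nbhd_smul hS hgen ((htranslate r).2 hPg)⟩
  · rintro ⟨hgP, hPg⟩
    obtain ⟨r₁, h₁⟩ := exists_subset_nbhd_smul_of_relIndex_ne_zero (S := S) hgP
    obtain ⟨r₂, h₂⟩ := exists_subset_nbhd_smul_of_relIndex_ne_zero (S := S) hPg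
    exact ⟨max r₁ r₂, ((htranslate r₂).1 h₂).trans (nbhd_mono (le_max_right _ _) subset_rfl),
      h₁.trans (nbhd_mono (le_max_left _ _) subset_rfl)⟩

end Commensurability

section FiniteCosets

variable {S : Set G} {P : Subgroup G}

lemma finite_image_mul_smul_coe {s : G} (h : (ConjAct.toConjAct s • P).relIndex P ≠ 0) :
    ((fun p => (p * s) • (P : Set G)) '' P).Finite := by
  obtain ⟨F, -, hF, hFimg⟩ := Set.exists_subset_image_finite_and.1
    ⟨_, subset_rfl, finite_image_smul_coe_iff.2 h, rfl⟩
  refine (hF.image fun t => (t * s) • (P : Set G)).subset ?_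
  rintro _ ⟨p, hp, rfl⟩
  obtain ⟨t, ht, htp⟩ : p • ((ConjAct.toConjAct s • P : Subgroup G) : Set G) ∈
      (· • ((ConjAct.toConjAct s • P : Subgroup G) : Set G)) '' F :=
    hFimg ▸ ⟨p, hp, rfl⟩
  refine ⟨t, ht, (leftCoset_eq_iff _).2 ?_⟩
  convert mem_conjAct_smul_iff.1 ((leftCoset_eq_iff _).1 htp) using 1
  group

lemma finite_setOf_smul_closeWithin_self (hS : S.Finite) (hgen : Subgroup.closure S = ⊤)
    (P : Subgroup G) (R : ℝ) :
    {A : Set G | (∃ x : G, A = x • (P : Set G)) ∧ CloseWithin S R A P}.Finite := by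
  -- such a coset is `p s P` with `p ∈ P`, `|s| ≤ R` and `P ⊆ N_R(s P)`; for each such `s`
  -- there are finitely many, as `P ∩ s P s⁻¹` has finite index in `P`
  let good := {s : G | (wordLength S s : ℝ) ≤ R ∧ (P : Set G) ⊆ nbhd S R (s • (P : Set G))}
  have hgood : good.Finite := (finite_setOf_wordLength_le hS hgen R).subset fun _ hs => hs.1
  refine (hgood.biUnion fun s hs => finite_image_mul_smul_coe
    (relIndex_ne_zero_of_subset_nbhd_smul hS hgen hs.2)).subset ?_
  rintro _ ⟨⟨x, rfl⟩, hAP, hPA⟩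
  obtain ⟨p, hp, hpx⟩ := hAP (Set.smul_mem_smul_set (a := x) P.one_mem)
  rw [smul_eq_mul, mul_one] at hpx
  refine Set.mem_biUnion (x := p⁻¹ * x) ⟨hpx, ?_⟩ ⟨p, hp, by simp only [mul_inv_cancel_left]⟩
  have := Set.smul_set_mono (a := p⁻¹) hPA
  rwa [smul_coe_set (P.inv_mem hp), ← nbhd_smul, smul_smul] at this

lemma finite_setOf_smul_closeWithin (hS : S.Finite) (hgen : Subgroup.closure S = ⊤)
    (P : Subgroup G) (R : ℝ) (g : G) :
    {A : Set G | (∃ x : G, A = x • (P : Set G)) ∧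
      CloseWithin S R A (g • (P : Set G))}.Finite := by
  refine ((finite_setOf_smul_closeWithin_self hS hgen P R).image (g • ·)).subset ?_
  rintro _ ⟨⟨x, rfl⟩, hA⟩
  refine ⟨(g⁻¹ * x) • (P : Set G), ⟨⟨_, rfl⟩, ?_⟩,
    by simp only [smul_smul, mul_inv_cancel_left]⟩
  rwa [← CloseWithin.smul_iff g, smul_smul, mul_inv_cancel_left]

lemma finite_setOf_smul_exists_closeWithin
    (hred : P.relIndex (Subgroup.Commensurable.commensurator P) ≠ 0) (hS : S.Finite)
    (hgen : Subgroup.closure S = ⊤) (D : Set G) :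
    {A : Set G | (∃ x : G, A = x • (P : Set G)) ∧ ∃ r : ℝ, CloseWithin S r A D}.Finite := by
  rcases Set.eq_empty_or_nonempty
      {A : Set G | (∃ x : G, A = x • (P : Set G)) ∧ ∃ r : ℝ, CloseWithin S r A D} with
    hempty | ⟨_, ⟨g, rfl⟩, r₀, hg⟩
  · simp [hempty]
  refine ((finite_image_smul_coe_iff.2 hred).image (g • ·)).subset ?_
  rintro _ ⟨⟨x, rfl⟩, r, hx⟩
  refine ⟨(g⁻¹ * x) • (P : Set G), ⟨g⁻¹ * x, ?_, rfl⟩,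
    by simp only [smul_smul, mul_inv_cancel_left]⟩
  rw [SetLike.mem_coe, ← exists_closeWithin_iff_mem_commensurator hS hgen]
  refine ⟨r + r₀, ?_⟩
  rw [← CloseWithin.smul_iff g, smul_smul, mul_inv_cancel_left]
  exact hx.trans hgen hg.symm

lemma finite_setOf_mem_cosets_exists_closeWithin {Ps : Finset (Subgroup G)}
    (hred : ∀ P ∈ Ps, P.relIndex (Subgroup.Commensurable.commensurator P) ≠ 0)
    (hS : S.Finite) (hgen : Subgroup.closure S = ⊤) (D : Set G) :
    {A : Set G | A ∈ cosets Ps ∧ ∃ r : ℝ, CloseWithin S r A D}.Finite := by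
  refine (Ps.finite_toSet.biUnion fun P hP =>
    finite_setOf_smul_exists_closeWithin (hred P hP) hS hgen D).subset ?_
  rintro _ ⟨⟨x, P, hP, rfl⟩, hclose⟩
  exact Set.mem_biUnion hP ⟨⟨x, rfl⟩, hclose⟩

end FiniteCosets

section PairQI

variable {S : Finset G} {T : Finset H} {Ps : Finset (Subgroup G)} {Qs : Finset (Subgroup H)}
  {L C M : ℝ≥0} {q : G → H}

lemma IsPairQI.exists_coset_map (hq : IsPairQI S T Ps Qs L C M q) :
    ∃ Ψ : Set G → Set H, ∀ A ∈ cosets Ps,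
      Ψ A ∈ cosets Qs ∧ CloseWithin (T : Set H) M (q '' A) (Ψ A) := by
  choose! Ψ hΨ hΨM using hq.coset_fwd
  exact ⟨Ψ, fun A hA => ⟨hΨ A hA, closeWithin_of_hdist_lt (hΨM A hA)⟩⟩

variable {Ψ : Set G → Set H} {A B : Set G}

lemma IsPairQI.closeWithin_coset_map (hq : IsPairQI S T Ps Qs L C M q)
    (hgen : Subgroup.closure (T : Set H) = ⊤)
    (hΨ : ∀ A ∈ cosets Ps, Ψ A ∈ cosets Qs ∧ CloseWithin (T : Set H) M (q '' A) (Ψ A))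
    (hA : A ∈ cosets Ps) (hB : B ∈ cosets Ps) {r : ℝ} (h : CloseWithin (S : Set G) r A B) :
    CloseWithin (T : Set H) (M + ((L * r + C) + M)) (Ψ A) (Ψ B) :=
  (hΨ A hA).2.symm.trans hgen ((h.image hq.upper).trans hgen (hΨ B hB).2)

lemma IsPairQI.closeWithin_of_coset_map_eq (hq : IsPairQI S T Ps Qs L C M q)
    (hgen : Subgroup.closure (T : Set H) = ⊤)
    (hΨ : ∀ A ∈ cosets Ps, Ψ A ∈ cosets Qs ∧ CloseWithin (T : Set H) M (q '' A) (Ψ A))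
    (hA : A ∈ cosets Ps) (hB : B ∈ cosets Ps) (hAB : Ψ A = Ψ B) :
    CloseWithin (S : Set G) (L * ((M + M) + C)) A B :=
  CloseWithin.of_image (one_pos.trans_le hq.one_le) hq.lower
    ((hΨ A hA).2.trans hgen (hAB ▸ (hΨ B hB).2.symm))

end PairQI

/-- Being reducible (every peripheral subgroup has finite index in its commensurator) is a
quasi-isometry invariant of group pairs. -/
theorem statement7 (S : Finset G) (T : Finset H)
    (Ps : Finset (Subgroup G)) (Qs : Finset (Subgroup H))
    (hG : IsGroupPair S Ps) (hH : IsGroupPair T Qs)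
    (L C M : ℝ≥0) (q : G → H) (hq : IsPairQI S T Ps Qs L C M q)
    (hred : ∀ Q ∈ Qs, Q.relIndex (Subgroup.Commensurable.commensurator Q) ≠ 0) :
    ∀ P ∈ Ps, P.relIndex (Subgroup.Commensurable.commensurator P) ≠ 0 := by
  intro P hP
  obtain ⟨Ψ, hΨ⟩ := hq.exists_coset_map
  have hcoset (g : G) : g • (P : Set G) ∈ cosets Ps := ⟨g, P, hP, rfl⟩
  rw [← finite_image_smul_coe_iff]
  set 𝒜 := (· • (P : Set G)) '' (Subgroup.Commensurable.commensurator P : Set G)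
  have hfiber (B : Set H) : (𝒜 ∩ Ψ ⁻¹' {B}).Finite := by
    rcases (𝒜 ∩ Ψ ⁻¹' {B}).eq_empty_or_nonempty with hempty | ⟨_, ⟨g₁, -, rfl⟩, hg₁⟩
    · simp [hempty]
    refine (finite_setOf_smul_closeWithin S.finite_toSet hG.generates P
      (L * ((M + M) + C)) g₁).subset ?_
    rintro _ ⟨⟨g, -, rfl⟩, hg⟩
    exact ⟨⟨g, rfl⟩, hq.closeWithin_of_coset_map_eq hH.generates hΨ (hcoset g) (hcoset g₁)
      (hg.trans hg₁.symm)⟩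
  refine ((finite_setOf_mem_cosets_exists_closeWithin hred T.finite_toSet hH.generates
    (Ψ P)).biUnion fun B _ => hfiber B).subset ?_
  rintro _ ⟨g, hg, rfl⟩
  obtain ⟨r, hr⟩ := (exists_closeWithin_iff_mem_commensurator S.finite_toSet hG.generates).2 hg
  have hPc : (P : Set G) ∈ cosets Ps := ⟨1, P, hP, (one_smul G _).symm⟩
  exact Set.mem_biUnion ⟨(hΨ _ (hcoset g)).1, _,
    hq.closeWithin_coset_map hH.generates hΨ (hcoset g) hPc hr⟩ ⟨⟨g, hg, rfl⟩, rfl⟩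

end CIC
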